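/- arXiv:2009.02866 — 4 statements merged into one kernel-verified Lean document; each statement's English description precedes it below -/
import Mathlib

section
/- Let (M, d) be a metric space, K : M × M → ℝ a continuous strictly positive definite kernel, and x_1, …, x_n ∈ M pairwise distinct. Then there exist ε > 0 and θ > 0 such that for every choice of points y_1, …, y_n ∈ M with d(x_i, y_i) ≤ ε for each i = 1, …, n, the matrix S = S(y_1, …, y_n) satisfies ‖S α‖ ≥ θ ‖α‖ for all α ∈ ℝ^n. -/
open MeasureTheory Matrix Set

/-- Euclidean norm of a vector in `ℝ^m`. -/
noncomputable def eNorm {m : ℕ} (v : Fin m → ℝ) : ℝ := Real.sqrt (∑ i, v i ^ 2)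

/-- The kernel combination `g_α(y) = Σ_i α_i K(x_i, y)`. -/
def gcomb {M : Type*} {n : ℕ} (K : M → M → ℝ) (xc : Fin n → M) (α : Fin n → ℝ) (y : M) : ℝ :=
  ∑ i, α i * K (xc i) y

/-- The matrix `S(y_1,…,y_n)` with entries `S_{ij} = K(x_j, y_i)`. -/
def Smat {M : Type*} {n : ℕ} (K : M → M → ℝ) (xc : Fin n → M) (y : Fin n → M) :
    Matrix (Fin n) (Fin n) ℝ :=
  Matrix.of fun i j => K (xc j) (y i)

/-- A kernel is strictly positive definite: symmetric, and the Gram matrix of any finite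
collection of pairwise distinct points is positive definite. -/
def StrictlyPD {M : Type*} (K : M → M → ℝ) : Prop :=
  (∀ y z, K y z = K z y) ∧
  ∀ (m : ℕ) (y : Fin m → M), Function.Injective y →
    (Matrix.of fun i j => K (y i) (y j)).PosDef

/-!
At the kernel centers themselves `S(x_1, …, x_n)` is the Gram matrix, which is positive definite
and hence invertible, so it is bounded below on Euclidean space. The map `y ↦ S(y)` is continuous,
and a lower bound `c` of an operator survives, halved, every perturbation of operator norm at
most `c / 2`.
-/

open Topology

section LowerBound

variable {𝕜 E F : Type*} [NontriviallyNormedField 𝕜] [NormedAddCommGroup E] [NormedSpace 𝕜 E]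
  [NormedAddCommGroup F] [NormedSpace 𝕜 F]

theorem ContinuousLinearMap.exists_pos_mul_norm_le_norm_of_isUnit {T : E →L[𝕜] E}
    (hT : IsUnit T) : ∃ c > 0, ∀ v, c * ‖v‖ ≤ ‖T v‖ := by
  obtain ⟨u, rfl⟩ := hT
  set C := ‖(↑u⁻¹ : E →L[𝕜] E)‖
  refine ⟨(C + 1)⁻¹, by positivity, fun v => ?_⟩
  have hv : ‖v‖ ≤ C * ‖(u : E →L[𝕜] E) v‖ :=
    calc ‖v‖ = ‖(↑u⁻¹ * ↑u : E →L[𝕜] E) v‖ := by rw [u.inv_mul]; rfl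
      _ ≤ C * ‖(u : E →L[𝕜] E) v‖ := (↑u⁻¹ : E →L[𝕜] E).le_opNorm _
  rw [inv_mul_le_iff₀ (by positivity)]
  nlinarith [norm_nonneg ((u : E →L[𝕜] E) v), norm_nonneg v]

theorem ContinuousLinearMap.half_mul_norm_le_norm_of_norm_sub_le {S T : E →L[𝕜] F} {c : ℝ}
    (hT : ∀ v, c * ‖v‖ ≤ ‖T v‖) (hST : ‖S - T‖ ≤ c / 2) (v : E) :
    c / 2 * ‖v‖ ≤ ‖S v‖ := by
  have htri : ‖T v‖ ≤ ‖S v‖ + ‖(S - T) v‖ :=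
    calc ‖T v‖ = ‖S v - (S - T) v‖ := by simp
      _ ≤ ‖S v‖ + ‖(S - T) v‖ := norm_sub_le _ _
  have hdiff : ‖(S - T) v‖ ≤ c / 2 * ‖v‖ :=
    ((S - T).le_opNorm v).trans (mul_le_mul_of_nonneg_right hST (norm_nonneg v))
  linarith [hT v]

theorem ContinuousAt.eventually_half_mul_norm_le_norm {X : Type*} [TopologicalSpace X]
    {T : X → E →L[𝕜] F} {x₀ : X} (hT : ContinuousAt T x₀) {c : ℝ} (hc : 0 < c)
    (hT₀ : ∀ v, c * ‖v‖ ≤ ‖T x₀ v‖) :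
    ∀ᶠ x in 𝓝 x₀, ∀ v, c / 2 * ‖v‖ ≤ ‖T x v‖ := by
  filter_upwards [hT (Metric.closedBall_mem_nhds _ (half_pos hc))] with x hx
  rw [mem_preimage, Metric.mem_closedBall, dist_eq_norm] at hx
  exact ContinuousLinearMap.half_mul_norm_le_norm_of_norm_sub_le hT₀ hx

end LowerBound

theorem eNorm_eq_norm_toLp {m : ℕ} (v : Fin m → ℝ) : eNorm v = ‖WithLp.toLp 2 v‖ := by
  simp [eNorm, EuclideanSpace.norm_eq, Real.norm_eq_abs, sq_abs]

theorem Matrix.continuous_toEuclideanCLM {ι 𝕜 : Type*} [Fintype ι] [DecidableEq ι] [RCLike 𝕜] :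
    Continuous (toEuclideanCLM (n := ι) (𝕜 := 𝕜)) :=
  LinearMap.continuous_of_finiteDimensional
    (toEuclideanCLM (n := ι) (𝕜 := 𝕜)).toAlgEquiv.toLinearEquiv.toLinearMap

section Kernel

variable {M : Type*} {n : ℕ} (K : M → M → ℝ) (xc : Fin n → M)

theorem Smat_self_posDef (hK : StrictlyPD K) (hxc : Function.Injective xc) :
    (Smat K xc xc).PosDef := by
  have hsymm : Smat K xc xc = Matrix.of fun i j => K (xc i) (xc j) := by
    ext i j
    exact hK.1 (xc j) (xc i)
  exact hsymm ▸ hK.2 n xc hxc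

theorem continuous_Smat [TopologicalSpace M] (hK : Continuous fun p : M × M => K p.1 p.2) :
    Continuous (Smat K xc) :=
  continuous_matrix fun i _ =>
    hK.comp (continuous_const.prodMk (continuous_apply i))

end Kernel

theorem stmt0 {M : Type*} [MetricSpace M] {n : ℕ}
    (K : M → M → ℝ) (hKcont : Continuous fun p : M × M => K p.1 p.2)
    (hKspd : StrictlyPD K)
    (xc : Fin n → M) (hxc : Function.Injective xc) :
    ∃ ε > 0, ∃ θ > 0, ∀ y : Fin n → M, (∀ i, dist (xc i) (y i) ≤ ε) →
      ∀ α : Fin n → ℝ, θ * eNorm α ≤ eNorm ((Smat K xc y) *ᵥ α) := by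
  set T : (Fin n → M) → EuclideanSpace ℝ (Fin n) →L[ℝ] EuclideanSpace ℝ (Fin n) :=
    fun y => toEuclideanCLM (n := Fin n) (𝕜 := ℝ) (Smat K xc y)
  have hTunit : IsUnit (T xc) := (Smat_self_posDef K xc hKspd hxc).isUnit.map _
  obtain ⟨c, hc, hTxc⟩ := ContinuousLinearMap.exists_pos_mul_norm_le_norm_of_isUnit hTunit
  have hTcont : Continuous T := continuous_toEuclideanCLM.comp (continuous_Smat K xc hKcont)
  obtain ⟨ε, hε, hball⟩ := Metric.nhds_basis_closedBall.eventually_iff.mp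
    (hTcont.continuousAt.eventually_half_mul_norm_le_norm hc hTxc)
  refine ⟨ε, hε, c / 2, half_pos hc, fun y hy α => ?_⟩
  have hyε : y ∈ Metric.closedBall xc ε :=
    (dist_pi_le_iff hε.le).mpr fun i => (dist_comm _ _).trans_le (hy i)
  simpa [eNorm_eq_norm_toLp, T] using hball hyε (WithLp.toLp 2 α)
end

section
/- (Lemma 2.) Let x : ℝ → M be continuous, let I ⊆ [0, ∞) be a bounded Lebesgue-measurable set, and for i = 1, …, n let I_i = { s ∈ I : d(x_i, x(s)) ≤ ε }. If μ(I_i) ≥ τ₀ for each i = 1, …, n, where τ₀ > 0, then for every α ∈ ℝ^n, ∫_I (g_α(x(τ)))² dτ ≥ τ₀ θ² ‖α‖². -/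
open MeasureTheory Matrix Set

/-!
Pick, in each ball `B_ε(x_i)`, a minimiser `y_i` of `g_α²`. The rows of `S(y_1, …, y_n) α`
are the values `g_α(y_i)`, so `θ² ‖α‖² ≤ Σ_i g_α(y_i)²`. On `I_i` the integrand is at least
`g_α(y_i)²`, and the `I_i` are pairwise disjoint subsets of `I` because the balls are, so
`∫_I g_α(x)² ≥ Σ_i μ(I_i) g_α(y_i)² ≥ τ₀ Σ_i g_α(y_i)² ≥ τ₀ θ² ‖α‖²`.
-/

open Function

section Kernel

variable {M : Type*} {n : ℕ} (K : M → M → ℝ) (xc : Fin n → M)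

theorem eNorm_sq {m : ℕ} (v : Fin m → ℝ) : eNorm v ^ 2 = ∑ i, v i ^ 2 :=
  Real.sq_sqrt (Finset.sum_nonneg fun _ _ => sq_nonneg _)

theorem Smat_mulVec_apply (y : Fin n → M) (α : Fin n → ℝ) (i : Fin n) :
    (Smat K xc y *ᵥ α) i = gcomb K xc α (y i) := by
  simp only [Smat, gcomb, mulVec, dotProduct, of_apply, mul_comm]

theorem continuous_gcomb [TopologicalSpace M] (hK : Continuous fun p : M × M => K p.1 p.2)
    (α : Fin n → ℝ) : Continuous (gcomb K xc α) :=
  continuous_finsetSum _ fun i _ => continuous_const.mul (hK.comp (.prodMk_right (xc i)))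

theorem sq_mul_eNorm_sq_le_sum_gcomb_sq {θ : ℝ} (hθ : 0 ≤ θ) {y : Fin n → M}
    {α : Fin n → ℝ} (hS : θ * eNorm α ≤ eNorm (Smat K xc y *ᵥ α)) :
    θ ^ 2 * eNorm α ^ 2 ≤ ∑ i, gcomb K xc α (y i) ^ 2 := by
  calc θ ^ 2 * eNorm α ^ 2 = (θ * eNorm α) ^ 2 := by ring
    _ ≤ eNorm (Smat K xc y *ᵥ α) ^ 2 :=
      pow_le_pow_left₀ (mul_nonneg hθ (Real.sqrt_nonneg _)) hS 2
    _ = ∑ i, gcomb K xc α (y i) ^ 2 := by simp only [eNorm_sq, Smat_mulVec_apply]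

end Kernel

theorem pairwise_disjoint_setOf_dist_le {M α ι : Type*} [PseudoMetricSpace M] {xc : ι → M}
    {ε : ℝ} (hsep : ∀ i j, i ≠ j → ε < (1 / 2) * dist (xc i) (xc j)) (x : α → M) (I : Set α) :
    Pairwise (Disjoint on fun i => {s ∈ I | dist (xc i) (x s) ≤ ε}) := by
  intro i j hij
  have hballs : Disjoint (Metric.closedBall (xc i) ε) (Metric.closedBall (xc j) ε) :=
    Metric.closedBall_disjoint_closedBall (by linarith [hsep i j hij])
  refine (hballs.preimage x).mono ?_ ?_ <;>
    exact fun s hs => by simpa [dist_comm] using hs.2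

section Integral

variable {X ι : Type*} [MeasurableSpace X] {μ : Measure X} {f : X → ℝ}

theorem mul_le_setIntegral_of_le {J : Set X} {c τ₀ : ℝ} (hc : 0 ≤ c) (hτ₀ : 0 ≤ τ₀)
    (hJ : MeasurableSet J) (hμJ : μ J ≠ ⊤) (hτJ : ENNReal.ofReal τ₀ ≤ μ J)
    (hcf : ∀ s ∈ J, c ≤ f s) (hf : IntegrableOn f J μ) :
    τ₀ * c ≤ ∫ s in J, f s ∂μ := by
  have hτ : τ₀ ≤ μ.real J := by
    simpa [measureReal_def, ENNReal.toReal_ofReal hτ₀] using ENNReal.toReal_mono hμJ hτJ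
  calc τ₀ * c ≤ c * μ.real J := by rw [mul_comm]; exact mul_le_mul_of_nonneg_left hτ hc
    _ ≤ ∫ s in J, f s ∂μ := setIntegral_ge_of_const_le_real hJ hμJ hcf hf

theorem sum_setIntegral_le_setIntegral [Fintype ι] {I : Set X} {J : ι → Set X}
    (hJ : ∀ i, MeasurableSet (J i)) (hJI : ∀ i, J i ⊆ I) (hdisj : Pairwise (Disjoint on J))
    (hf : IntegrableOn f I μ) (hf0 : 0 ≤ f) :
    ∑ i, ∫ s in J i, f s ∂μ ≤ ∫ s in I, f s ∂μ := by
  rw [← integral_iUnion_fintype hJ hdisj fun i => hf.mono_set (hJI i)]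
  exact setIntegral_mono_set hf (.of_forall hf0) (iUnion_subset hJI).eventuallyLE

theorem mul_sum_le_setIntegral_of_pairwise_disjoint [Fintype ι] {I : Set X} {J : ι → Set X}
    {c : ι → ℝ} {τ₀ : ℝ} (hc : 0 ≤ c) (hτ₀ : 0 ≤ τ₀) (hJ : ∀ i, MeasurableSet (J i))
    (hJI : ∀ i, J i ⊆ I) (hdisj : Pairwise (Disjoint on J)) (hμJ : ∀ i, μ (J i) ≠ ⊤)
    (hτJ : ∀ i, ENNReal.ofReal τ₀ ≤ μ (J i)) (hcf : ∀ i, ∀ s ∈ J i, c i ≤ f s)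
    (hf : IntegrableOn f I μ) (hf0 : 0 ≤ f) :
    τ₀ * ∑ i, c i ≤ ∫ s in I, f s ∂μ :=
  calc τ₀ * ∑ i, c i = ∑ i, τ₀ * c i := Finset.mul_sum _ _ _
    _ ≤ ∑ i, ∫ s in J i, f s ∂μ := Finset.sum_le_sum fun i _ =>
        mul_le_setIntegral_of_le (hc i) hτ₀ (hJ i) (hμJ i) (hτJ i) (hcf i) (hf.mono_set (hJI i))
    _ ≤ ∫ s in I, f s ∂μ := sum_setIntegral_le_setIntegral hJ hJI hdisj hf hf0

end Integral

theorem stmt3_general {M : Type*} [MetricSpace M] {n : ℕ}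
    (K : M → M → ℝ) (hKcont : Continuous fun p : M × M => K p.1 p.2)
    (xc : Fin n → M)
    (ε θ : ℝ) (hε : 0 < ε) (hθ : 0 < θ)
    -- (i) the lower bound on `S(y_1,…,y_n)` for perturbed centers
    (hSbound : ∀ y : Fin n → M, (∀ i, dist (xc i) (y i) ≤ ε) →
      ∀ α : Fin n → ℝ, θ * eNorm α ≤ eNorm ((Smat K xc y) *ᵥ α))
    -- (ii) `ε` is less than half the minimal pairwise distance between the centers
    (hsep : ∀ i j, i ≠ j → ε < (1 / 2) * dist (xc i) (xc j))
    -- (iii) the closed balls of radius `ε` about the centers are compact and connected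
    (hball : ∀ i, IsCompact (Metric.closedBall (xc i) ε) ∧
      IsConnected (Metric.closedBall (xc i) ε))
    (x : ℝ → M) (hx : Continuous x)
    (I : Set ℝ) (hIbdd : Bornology.IsBounded I)
    (hImeas : MeasurableSet I)
    (τ₀ : ℝ) (hτ₀ : 0 < τ₀)
    (hIi : ∀ i, ENNReal.ofReal τ₀ ≤ volume {s ∈ I | dist (xc i) (x s) ≤ ε}) :
    ∀ α : Fin n → ℝ, τ₀ * θ ^ 2 * eNorm α ^ 2 ≤ ∫ τ in I, (gcomb K xc α (x τ)) ^ 2 := by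
  intro α
  set g := gcomb K xc α
  have hg : Continuous g := continuous_gcomb K xc hKcont α
  choose y hy hymin using fun i => (hball i).1.exists_isMinOn
    (Metric.nonempty_closedBall.2 hε.le) (hg.pow 2).continuousOn
  have hθα : θ ^ 2 * eNorm α ^ 2 ≤ ∑ i, g (y i) ^ 2 :=
    sq_mul_eNorm_sq_le_sum_gcomb_sq K xc hθ.le
      (hSbound y (fun i => dist_comm (y i) (xc i) ▸ hy i) α)
  have hJ : ∀ i, MeasurableSet {s ∈ I | dist (xc i) (x s) ≤ ε} := fun i =>
    hImeas.inter (measurableSet_le (continuous_const.dist hx).measurable measurable_const)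
  have hf : IntegrableOn (fun τ => g (x τ) ^ 2) I :=
    (((hg.comp hx).pow 2).continuousOn.integrableOn_compact hIbdd.isCompact_closure).mono_set
      subset_closure
  calc τ₀ * θ ^ 2 * eNorm α ^ 2 ≤ τ₀ * ∑ i, g (y i) ^ 2 := by
        rw [mul_assoc]; exact mul_le_mul_of_nonneg_left hθα hτ₀.le
    _ ≤ ∫ τ in I, g (x τ) ^ 2 :=
        mul_sum_le_setIntegral_of_pairwise_disjoint (fun _ => sq_nonneg _) hτ₀.le hJ
          (fun _ _ hs => hs.1) (pairwise_disjoint_setOf_dist_le hsep x I)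
          (fun _ => (hIbdd.subset fun _ hs => hs.1).measure_lt_top.ne) hIi
          (fun i s hs => hymin i (by rw [Metric.mem_closedBall, dist_comm]; exact hs.2)) hf
          fun _ => sq_nonneg _

theorem stmt3 {M : Type*} [MetricSpace M] {n : ℕ}
    (K : M → M → ℝ) (hKcont : Continuous fun p : M × M => K p.1 p.2)
    (hKspd : StrictlyPD K)
    (xc : Fin n → M) (hxc : Function.Injective xc)
    (ε θ : ℝ) (hε : 0 < ε) (hθ : 0 < θ)
    -- (i) the lower bound on `S(y_1,…,y_n)` for perturbed centers
    (hSbound : ∀ y : Fin n → M, (∀ i, dist (xc i) (y i) ≤ ε) →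
      ∀ α : Fin n → ℝ, θ * eNorm α ≤ eNorm ((Smat K xc y) *ᵥ α))
    -- (ii) `ε` is less than half the minimal pairwise distance between the centers
    (hsep : ∀ i j, i ≠ j → ε < (1 / 2) * dist (xc i) (xc j))
    -- (iii) the closed balls of radius `ε` about the centers are compact and connected
    (hball : ∀ i, IsCompact (Metric.closedBall (xc i) ε) ∧
      IsConnected (Metric.closedBall (xc i) ε))
    (x : ℝ → M) (hx : Continuous x)
    (I : Set ℝ) (hIsub : I ⊆ Set.Ici 0) (hIbdd : Bornology.IsBounded I)
    (hImeas : MeasurableSet I)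
    (τ₀ : ℝ) (hτ₀ : 0 < τ₀)
    (hIi : ∀ i, ENNReal.ofReal τ₀ ≤ volume {s ∈ I | dist (xc i) (x s) ≤ ε}) :
    ∀ α : Fin n → ℝ, τ₀ * θ ^ 2 * eNorm α ^ 2 ≤ ∫ τ in I, (gcomb K xc α (x τ)) ^ 2 :=
  stmt3_general K hKcont xc ε θ hε hθ hSbound hsep hball x hx I hIbdd hImeas τ₀ hτ₀ hIi
end

section
/- (PE-2 implies PE-1 under uniform equicontinuity.) Let (M, d) be a compact metric space, K : M × M → ℝ a continuous strictly positive definite kernel, x_1, …, x_n ∈ M pairwise distinct, and x : [0, ∞) → M continuous. Suppose the family of functions U(S̄_n) = { t ↦ g_α(x(t)) : α ∈ ℝ^n, αᵀ G α = 1 } is uniformly equicontinuous on [0, ∞), and that the finite-dimensional PE-2 condition holds with constants T₂, γ₂, Δ₂ > 0. Then there exist constants T₁, γ₁, δ₁, Δ₁ > 0 such that the finite-dimensional PE-1 condition holds. -/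
/-!
Normalise `α` so that `αᵀ G α = 1` and put `f(t) = g_α(x(t))`. By PE-2 the maximum of `f²` over
`[t, t + Δ₂]` is at least `γ₂ / Δ₂`, say at `s`. Uniform equicontinuity keeps `f` within half of
`√(γ₂ / Δ₂)` of `f(s)` on a window `[s, s + δ]` whose length does not depend on `α`, so `f` has a
constant sign there and its integral is at least `δ √(γ₂ / Δ₂) / 2` in absolute value.
-/

open MeasureTheory Matrix Set

/-- The Gram matrix `G_{ij} = K(x_i, x_j)` of the kernel centers. -/
def Gram {M : Type*} {n : ℕ} (K : M → M → ℝ) (xc : Fin n → M) : Matrix (Fin n) (Fin n) ℝ :=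
  Matrix.of fun i j => K (xc i) (xc j)

/-- The finite-dimensional PE-1 condition with constants `T₁, γ₁, δ₁, Δ₁`. -/
def PE1 {M : Type*} {n : ℕ} (K : M → M → ℝ) (xc : Fin n → M) (x : ℝ → M)
    (T₁ γ₁ δ₁ Δ₁ : ℝ) : Prop :=
  ∀ t ≥ T₁, ∀ α : Fin n → ℝ, ∃ s ∈ Set.Icc t (t + Δ₁),
    γ₁ * Real.sqrt (α ⬝ᵥ (Gram K xc) *ᵥ α) ≤
      |∫ τ in Set.Icc s (s + δ₁), gcomb K xc α (x τ)|

/-- The finite-dimensional PE-2 condition with constants `T₂, γ₂, Δ₂`. -/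
def PE2 {M : Type*} {n : ℕ} (K : M → M → ℝ) (xc : Fin n → M) (x : ℝ → M)
    (T₂ γ₂ Δ₂ : ℝ) : Prop :=
  ∀ t ≥ T₂, ∀ α : Fin n → ℝ,
    γ₂ * (α ⬝ᵥ (Gram K xc) *ᵥ α) ≤ ∫ τ in Set.Icc t (t + Δ₂), (gcomb K xc α (x τ)) ^ 2

theorem exists_mem_Icc_setIntegral_sq_le {f : ℝ → ℝ} {a b : ℝ} (hab : a ≤ b)
    (hf : ContinuousOn f (Icc a b)) :
    ∃ s ∈ Icc a b, ∫ τ in Icc a b, f τ ^ 2 ≤ (b - a) * f s ^ 2 := by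
  obtain ⟨s, hs, hmax⟩ := isCompact_Icc.exists_isMaxOn (nonempty_Icc.2 hab) (hf.pow 2)
  refine ⟨s, hs, ?_⟩
  have hbound : ∀ τ ∈ Icc a b, ‖f τ ^ 2‖ ≤ f s ^ 2 := fun τ hτ => by
    rw [Real.norm_eq_abs, abs_sq]
    exact hmax hτ
  calc ∫ τ in Icc a b, f τ ^ 2 ≤ ‖∫ τ in Icc a b, f τ ^ 2‖ := Real.le_norm_self _
    _ ≤ f s ^ 2 * volume.real (Icc a b) :=
      norm_setIntegral_le_of_norm_le_const measure_Icc_lt_top hbound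
    _ = (b - a) * f s ^ 2 := by rw [Real.volume_real_Icc_of_le hab, mul_comm]

theorem mul_abs_sub_le_abs_setIntegral_Icc {f : ℝ → ℝ} {a b s η : ℝ} (hab : a ≤ b)
    (hf : IntegrableOn f (Icc a b)) (hclose : ∀ τ ∈ Icc a b, |f τ - f s| ≤ η) :
    (b - a) * (|f s| - η) ≤ |∫ τ in Icc a b, f τ| := by
  have hsplit : ∫ τ in Icc a b, f τ = (b - a) * f s + ∫ τ in Icc a b, (f τ - f s) := by
    rw [integral_sub hf (integrableOn_const measure_Icc_lt_top.ne), setIntegral_const,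
      Real.volume_real_Icc_of_le hab, smul_eq_mul]
    ring
  have hdev : |∫ τ in Icc a b, (f τ - f s)| ≤ η * (b - a) := by
    simpa only [Real.volume_real_Icc_of_le hab, Real.norm_eq_abs] using
      norm_setIntegral_le_of_norm_le_const (f := fun τ => f τ - f s) (μ := volume)
        measure_Icc_lt_top hclose
  calc (b - a) * (|f s| - η) = |(b - a) * f s| - η * (b - a) := by
        rw [abs_mul, abs_of_nonneg (sub_nonneg.2 hab)]; ring
    _ ≤ |(b - a) * f s| - |∫ τ in Icc a b, (f τ - f s)| := by linarith
    _ ≤ |∫ τ in Icc a b, f τ| := by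
        rw [hsplit, ← abs_neg (∫ τ in Icc a b, (f τ - f s)), ← sub_neg_eq_add]
        exact abs_sub_abs_le_abs_sub _ _

/-- A scalar PE-2 bound on `[t, t + Δ]` together with a modulus of continuity at scale `δ` gives a
scalar PE-1 bound with window `δ`. -/
theorem exists_mem_Icc_le_abs_setIntegral {f : ℝ → ℝ} {t Δ δ γ η : ℝ} (hΔ : 0 < Δ) (hδ : 0 ≤ δ)
    (hf : ContinuousOn f (Ici t)) (hsq : γ ≤ ∫ τ in Icc t (t + Δ), f τ ^ 2)
    (hclose : ∀ s ∈ Icc t (t + Δ), ∀ τ ∈ Icc s (s + δ), |f τ - f s| ≤ η) :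
    ∃ s ∈ Icc t (t + Δ), δ * (√(γ / Δ) - η) ≤ |∫ τ in Icc s (s + δ), f τ| := by
  obtain ⟨s, hs, hmax⟩ := exists_mem_Icc_setIntegral_sq_le
    (le_add_of_nonneg_right hΔ.le) (hf.mono Icc_subset_Ici_self)
  have hlarge : √(γ / Δ) ≤ |f s| := by
    rw [← Real.sqrt_sq_eq_abs]
    refine Real.sqrt_le_sqrt ((div_le_iff₀ hΔ).2 ?_)
    linarith [show t + Δ - t = Δ by ring]
  have hint : IntegrableOn f (Icc s (s + δ)) :=
    (hf.mono fun τ hτ => hs.1.trans hτ.1).integrableOn_Icc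
  refine ⟨s, hs, ?_⟩
  calc δ * (√(γ / Δ) - η) ≤ (s + δ - s) * (|f s| - η) := by rw [add_sub_cancel_left]; gcongr
    _ ≤ _ := mul_abs_sub_le_abs_setIntegral_Icc (le_add_of_nonneg_right hδ) hint (hclose s hs)

theorem continuousOn_Ici_of_abs_sub_lt {f : ℝ → ℝ} {a : ℝ}
    (h : ∀ ε > 0, ∃ δ > 0, ∀ s t, a ≤ s → a ≤ t → |s - t| < δ → |f s - f t| < ε) :
    ContinuousOn f (Ici a) :=
  (Metric.uniformContinuousOn_iff.2 fun ε hε =>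
    (h ε hε).imp fun _ ⟨hδ, h'⟩ => ⟨hδ, fun s hs t ht => h' s t hs ht⟩).continuousOn

theorem gcomb_smul {M : Type*} {n : ℕ} (K : M → M → ℝ) (xc : Fin n → M) (c : ℝ)
    (α : Fin n → ℝ) (y : M) : gcomb K xc (c • α) y = c * gcomb K xc α y := by
  simp only [gcomb, Pi.smul_apply, smul_eq_mul, Finset.mul_sum, mul_assoc]

theorem smul_dotProduct_mulVec_smul {n : ℕ} (A : Matrix (Fin n) (Fin n) ℝ) (c : ℝ)
    (α : Fin n → ℝ) : (c • α) ⬝ᵥ A *ᵥ (c • α) = c ^ 2 * (α ⬝ᵥ A *ᵥ α) := by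
  rw [mulVec_smul, smul_dotProduct, dotProduct_smul, smul_eq_mul, smul_eq_mul]
  ring

theorem stmt6_general {M : Type*} {n : ℕ}
    (K : M → M → ℝ)
    (xc : Fin n → M)
    (x : ℝ → M)
    -- the family `{ t ↦ g_α(x(t)) : αᵀ G α = 1 }` is uniformly equicontinuous on `[0,∞)`
    (hequi : ∀ η > 0, ∃ δ > 0, ∀ α : Fin n → ℝ, α ⬝ᵥ (Gram K xc) *ᵥ α = 1 →
      ∀ s t : ℝ, 0 ≤ s → 0 ≤ t → |s - t| < δ →
        |gcomb K xc α (x s) - gcomb K xc α (x t)| < η)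
    (T₂ γ₂ Δ₂ : ℝ) (hT₂ : 0 < T₂) (hγ₂ : 0 < γ₂) (hΔ₂ : 0 < Δ₂)
    (hPE2 : PE2 K xc x T₂ γ₂ Δ₂) :
    ∃ T₁ > 0, ∃ γ₁ > 0, ∃ δ₁ > 0, ∃ Δ₁ > 0, PE1 K xc x T₁ γ₁ δ₁ Δ₁ := by
  set c := √(γ₂ / Δ₂)
  have hc : 0 < c := Real.sqrt_pos.2 (div_pos hγ₂ hΔ₂)
  obtain ⟨δ, hδ, hδequi⟩ := hequi (c / 2) (half_pos hc)
  refine ⟨T₂, hT₂, δ / 2 * (c / 2), by positivity, δ / 2, half_pos hδ, Δ₂, hΔ₂, ?_⟩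
  intro t ht α
  set q := α ⬝ᵥ Gram K xc *ᵥ α
  rcases le_or_gt q 0 with hq | hq
  · refine ⟨t, ⟨le_rfl, by linarith⟩, ?_⟩
    rw [Real.sqrt_eq_zero'.2 hq, mul_zero]
    exact abs_nonneg _
  set β := (√q)⁻¹ • α
  have hβ : β ⬝ᵥ Gram K xc *ᵥ β = 1 := by
    rw [smul_dotProduct_mulVec_smul, inv_pow, Real.sq_sqrt hq.le, inv_mul_cancel₀ hq.ne']
  have hαβ : α = √q • β := by rw [smul_inv_smul₀ (Real.sqrt_pos.2 hq).ne']
  have ht0 : 0 ≤ t := hT₂.le.trans ht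
  have hf : ContinuousOn (fun τ => gcomb K xc β (x τ)) (Ici t) :=
    (continuousOn_Ici_of_abs_sub_lt fun ε hε =>
      (hequi ε hε).imp fun _ ⟨hδ', h⟩ => ⟨hδ', h β hβ⟩).mono (Ici_subset_Ici.2 ht0)
  have hclose : ∀ s ∈ Icc t (t + Δ₂), ∀ τ ∈ Icc s (s + δ / 2),
      |gcomb K xc β (x τ) - gcomb K xc β (x s)| ≤ c / 2 := fun s hs τ hτ =>
    (hδequi β hβ τ s (ht0.trans (hs.1.trans hτ.1)) (ht0.trans hs.1)
      (abs_lt.2 ⟨by linarith [hτ.1], by linarith [hτ.2]⟩)).le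
  have hsq := hPE2 t ht β
  rw [hβ, mul_one] at hsq
  obtain ⟨s, hs, hint⟩ := exists_mem_Icc_le_abs_setIntegral hΔ₂ (half_pos hδ).le hf hsq hclose
  refine ⟨s, hs, ?_⟩
  simp only [hαβ, gcomb_smul, integral_const_mul, abs_mul, abs_of_nonneg (Real.sqrt_nonneg q)]
  calc δ / 2 * (c / 2) * √q = √q * (δ / 2 * (c - c / 2)) := by ring
    _ ≤ _ := mul_le_mul_of_nonneg_left hint (Real.sqrt_nonneg q)

theorem stmt6 {M : Type*} [MetricSpace M] [CompactSpace M] {n : ℕ}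
    (K : M → M → ℝ) (hKcont : Continuous fun p : M × M => K p.1 p.2)
    (hKspd : StrictlyPD K)
    (xc : Fin n → M) (hxc : Function.Injective xc)
    (x : ℝ → M) (hx : ContinuousOn x (Set.Ici 0))
    -- the family `{ t ↦ g_α(x(t)) : αᵀ G α = 1 }` is uniformly equicontinuous on `[0,∞)`
    (hequi : ∀ η > 0, ∃ δ > 0, ∀ α : Fin n → ℝ, α ⬝ᵥ (Gram K xc) *ᵥ α = 1 →
      ∀ s t : ℝ, 0 ≤ s → 0 ≤ t → |s - t| < δ →
        |gcomb K xc α (x s) - gcomb K xc α (x t)| < η)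
    (T₂ γ₂ Δ₂ : ℝ) (hT₂ : 0 < T₂) (hγ₂ : 0 < γ₂) (hΔ₂ : 0 < Δ₂)
    (hPE2 : PE2 K xc x T₂ γ₂ Δ₂) :
    ∃ T₁ > 0, ∃ γ₁ > 0, ∃ δ₁ > 0, ∃ Δ₁ > 0, PE1 K xc x T₁ γ₁ δ₁ Δ₁ :=
  stmt6_general K xc x hequi T₂ γ₂ Δ₂ hT₂ hγ₂ hΔ₂ hPE2
end

section
/- Let (M, d) be a compact metric space, K : M × M → ℝ a continuous strictly positive definite kernel, x_1, …, x_n ∈ M pairwise distinct, and x : [0, ∞) → M uniformly continuous. Then the family of functions { t ↦ g_α(x(t)) : α ∈ ℝ^n, αᵀ G α = 1 } is uniformly equicontinuous on [0, ∞). -/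
open MeasureTheory Matrix Set

/-!
Writing `Φ(y) = (K(x_i, y))_i`, we have `g_α(y) = α ⬝ᵥ Φ(y)`. On the compact space `M` the
continuous map `Φ` is uniformly continuous, hence so is `Φ ∘ x` on `[0, ∞)`. Positive
definiteness of `G` makes the quadratic form coercive, `c ‖α‖² ≤ αᵀ G α` (minimise it over the
compact unit sphere), so the normalisation `αᵀ G α = 1` bounds `‖α‖` uniformly, and the functions
`t ↦ α ⬝ᵥ Φ(x t)` share the modulus of continuity of `Φ ∘ x` up to a uniform factor.
-/

section

variable {ι : Type*} [Fintype ι]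

theorem Matrix.PosDef.exists_pos_mul_sq_norm_le {G : Matrix ι ι ℝ} (hG : G.PosDef) :
    ∃ c > 0, ∀ v : ι → ℝ, c * ‖v‖ ^ 2 ≤ v ⬝ᵥ G *ᵥ v := by
  have hq : Continuous fun v : ι → ℝ => v ⬝ᵥ G *ᵥ v := by fun_prop
  obtain ⟨c, hc, hcS⟩ := (isCompact_sphere (0 : ι → ℝ) 1).exists_forall_le' hq.continuousOn
    (a := 0) fun u hu => by
      simpa using hG.dotProduct_mulVec_pos (ne_zero_of_mem_unit_sphere ⟨u, hu⟩)
  refine ⟨c, hc, fun v => ?_⟩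
  rcases eq_or_ne v 0 with rfl | hv
  · simp
  have hv' : 0 < ‖v‖ := norm_pos_iff.2 hv
  have hu : ‖v‖⁻¹ • v ∈ Metric.sphere (0 : ι → ℝ) 1 := by
    rw [mem_sphere_zero_iff_norm, norm_smul, norm_inv, norm_norm, inv_mul_cancel₀ hv'.ne']
  calc c * ‖v‖ ^ 2 ≤ (‖v‖⁻¹ • v) ⬝ᵥ G *ᵥ (‖v‖⁻¹ • v) * ‖v‖ ^ 2 := by gcongr; exact hcS _ hu
    _ = v ⬝ᵥ G *ᵥ v := by
      rw [mulVec_smul, smul_dotProduct, dotProduct_smul, smul_eq_mul, smul_eq_mul]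
      field_simp

theorem Matrix.PosDef.exists_norm_le_of_dotProduct_mulVec_eq_one {G : Matrix ι ι ℝ}
    (hG : G.PosDef) : ∃ B ≥ 0, ∀ v : ι → ℝ, v ⬝ᵥ G *ᵥ v = 1 → ‖v‖ ≤ B := by
  obtain ⟨c, hc, hcq⟩ := hG.exists_pos_mul_sq_norm_le
  refine ⟨√c⁻¹, Real.sqrt_nonneg _, fun v hv => Real.le_sqrt_of_sq_le ?_⟩
  rw [← one_div, le_div_iff₀' hc, ← hv]
  exact hcq v

theorem abs_dotProduct_le_card_mul_norm_mul_norm (a v : ι → ℝ) :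
    |a ⬝ᵥ v| ≤ Fintype.card ι * ‖a‖ * ‖v‖ :=
  calc |a ⬝ᵥ v| ≤ ∑ i, |a i * v i| := Finset.abs_sum_le_sum_abs _ _
    _ ≤ ∑ _i : ι, ‖a‖ * ‖v‖ := by
      gcongr with i
      rw [abs_mul]
      exact mul_le_mul (norm_le_pi_norm a i) (norm_le_pi_norm v i) (abs_nonneg _) (norm_nonneg _)
    _ = Fintype.card ι * ‖a‖ * ‖v‖ := by
      rw [Finset.sum_const, Finset.card_univ, nsmul_eq_mul, mul_assoc]

theorem UniformContinuousOn.exists_abs_dotProduct_sub_lt {β : Type*} [PseudoMetricSpace β]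
    {f : β → ι → ℝ} {S : Set β} (hf : UniformContinuousOn f S) {B : ℝ} (hB : 0 ≤ B) :
    ∀ η > 0, ∃ δ > 0, ∀ a : ι → ℝ, ‖a‖ ≤ B → ∀ s ∈ S, ∀ t ∈ S, dist s t < δ →
      |a ⬝ᵥ f s - a ⬝ᵥ f t| < η := by
  intro η hη
  have hL : 0 < Fintype.card ι * B + 1 := by positivity
  obtain ⟨δ, hδ, hfδ⟩ :=
    Metric.uniformContinuousOn_iff.1 hf (η / (Fintype.card ι * B + 1)) (by positivity)
  refine ⟨δ, hδ, fun a ha s hs t ht hst => ?_⟩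
  have hft : ‖f s - f t‖ < η / (Fintype.card ι * B + 1) := by
    rw [← dist_eq_norm]
    exact hfδ s hs t ht hst
  calc |a ⬝ᵥ f s - a ⬝ᵥ f t| = |a ⬝ᵥ (f s - f t)| := by rw [dotProduct_sub]
    _ ≤ Fintype.card ι * ‖a‖ * ‖f s - f t‖ := abs_dotProduct_le_card_mul_norm_mul_norm _ _
    _ ≤ (Fintype.card ι * B + 1) * ‖f s - f t‖ := by
      gcongr
      calc (Fintype.card ι : ℝ) * ‖a‖ ≤ Fintype.card ι * B := by gcongr
        _ ≤ Fintype.card ι * B + 1 := le_add_of_nonneg_right zero_le_one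
    _ < (Fintype.card ι * B + 1) * (η / (Fintype.card ι * B + 1)) := by gcongr
    _ = η := mul_div_cancel₀ η hL.ne'

end

theorem stmt7 {M : Type*} [MetricSpace M] [CompactSpace M] {n : ℕ}
    (K : M → M → ℝ) (hKcont : Continuous fun p : M × M => K p.1 p.2)
    (hKspd : StrictlyPD K)
    (xc : Fin n → M) (hxc : Function.Injective xc)
    (x : ℝ → M) (hx : UniformContinuousOn x (Set.Ici 0)) :
    -- the family `{ t ↦ g_α(x(t)) : αᵀ G α = 1 }` is uniformly equicontinuous on `[0,∞)`
    ∀ η > 0, ∃ δ > 0, ∀ α : Fin n → ℝ, α ⬝ᵥ (Gram K xc) *ᵥ α = 1 →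
      ∀ s t : ℝ, 0 ≤ s → 0 ≤ t → |s - t| < δ →
        |gcomb K xc α (x s) - gcomb K xc α (x t)| < η := by
  intro η hη
  obtain ⟨B, hB, hαB⟩ := (hKspd.2 n xc hxc).exists_norm_le_of_dotProduct_mulVec_eq_one
  have hΦ : Continuous fun y i => K (xc i) y :=
    continuous_pi fun i => hKcont.comp (continuous_const.prodMk continuous_id)
  have hΦx : UniformContinuousOn (fun t i => K (xc i) (x t)) (Ici 0) :=
    (CompactSpace.uniformContinuous_of_continuous hΦ).comp_uniformContinuousOn hx
  obtain ⟨δ, hδ, hgδ⟩ := hΦx.exists_abs_dotProduct_sub_lt hB η hη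
  exact ⟨δ, hδ, fun α hα s t hs ht hst =>
    hgδ α (hαB α hα) s hs t ht (by rwa [Real.dist_eq])⟩
end
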